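/- There exists a memoryless algorithm M : {L,R} × ℝ → ℝ that solves the convergence version of the midpoint localization problem: for every real D with 1 < D < ∞ and every real ε with 0 < ε ≤ D, the convergence dynamics F_{D,ε} induced by M maps [-D,D] into [-D,D], and for every x₀ ∈ [-D,D] there exists a finite integer n ≥ 0 such that the n-fold iterate satisfies |F_{D,ε}^n(x₀)| ≤ ε. (The same M must work simultaneously for all D and all ε.) -/
import Mathlib


inductive Side
  | L
  | R

/-- The convergence dynamics on `[-D, D]` induced by the memoryless algorithm `M`:
the walker at `x` with `x > ε` observes `(R, D - x)`, with `x < -ε` observes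
`(L, D + x)`, and moves by the displacement `M` prescribes; it stays put when
`|x| ≤ ε`. -/
noncomputable def stepC (M : Side × ℝ → ℝ) (D ε x : ℝ) : ℝ :=
  if ε < x then x + M (Side.R, D - x)
  else if x < -ε then x + M (Side.L, D + x)
  else x

/-! Auxiliary development for the memoryless midpoint-localization algorithm. -/

/-- A "protocol" distance value: `d = a + b√2` with rationals `a b`,
`0 < b ≤ min (d/2048) (1/1024)`.  The rational √2-coefficient `b` encodes the
current sweep step size. -/
def Prot (d : ℝ) : Prop :=
  ∃ b a : ℚ, d = (a : ℝ) + (b : ℝ) * Real.sqrt 2 ∧ 0 < b ∧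
    (b : ℝ) ≤ d / 2048 ∧ (b : ℝ) ≤ 1 / 1024

lemma Prot.pos {d : ℝ} (h : Prot d) : 0 < d := by
  obtain ⟨b, a, _, hb, hbd, _⟩ := h
  have hb' : (0 : ℝ) < (b : ℝ) := by exact_mod_cast hb
  linarith

lemma sqrt2_one_le : (1 : ℝ) ≤ Real.sqrt 2 := by
  nlinarith [Real.sq_sqrt (by norm_num : (2:ℝ) ≥ 0), Real.sqrt_nonneg 2]

lemma sqrt2_le : Real.sqrt 2 ≤ 3 / 2 := by
  nlinarith [Real.sq_sqrt (by norm_num : (2:ℝ) ≥ 0), Real.sqrt_nonneg 2]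

lemma coeff_unique {a b a' b' : ℚ} (h : (a : ℝ) + (b : ℝ) * Real.sqrt 2
    = (a' : ℝ) + (b' : ℝ) * Real.sqrt 2) : b = b' := by
  by_contra hne
  apply irrational_sqrt_two
  have hbb : ((b - b' : ℚ) : ℝ) ≠ 0 := by
    exact_mod_cast sub_ne_zero.mpr hne
  refine ⟨(a' - a) / (b - b'), ?_⟩
  push_cast
  rw [div_eq_iff (by push_cast at hbb; exact hbb)]
  nlinarith [h]

open Classical in
/-- The step size encoded in a protocol value. -/
noncomputable def bOf (d : ℝ) : ℚ := if h : Prot d then h.choose else 0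

lemma bOf_spec {d : ℝ} (h : Prot d) :
    ∃ a : ℚ, d = (a : ℝ) + (bOf d : ℝ) * Real.sqrt 2 ∧ 0 < bOf d ∧
      ((bOf d : ℝ)) ≤ d / 2048 ∧ ((bOf d : ℝ)) ≤ 1 / 1024 := by
  rw [bOf, dif_pos h]
  exact h.choose_spec

lemma bOf_eq {d : ℝ} (h : Prot d) {a b : ℚ}
    (hrep : d = (a : ℝ) + (b : ℝ) * Real.sqrt 2) : bOf d = b := by
  obtain ⟨a', h', _⟩ := bOf_spec h
  exact coeff_unique (h'.symm.trans hrep).symm |>.symm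
lemma exists_reset (d : ℝ) (hd : 0 < d) :
    ∃ g : ℝ, Prot g ∧ (bOf g : ℝ) ≤ d / 4096 ∧ d / 2 ≤ g ∧ g < d := by
  have hmin : (0 : ℝ) < min d 1 / 4096 := by
    have : (0:ℝ) < min d 1 := lt_min hd one_pos
    positivity
  obtain ⟨b, hb0, hbu⟩ := exists_rat_btwn hmin
  have hb0' : 0 < b := by exact_mod_cast hb0
  have hbd : (b : ℝ) ≤ d / 4096 := le_of_lt (lt_of_lt_of_le hbu (by
    have := min_le_left d 1
    linarith))
  have hb1 : (b : ℝ) ≤ 1 / 4096 := le_of_lt (lt_of_lt_of_le hbu (by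
    have := min_le_right d 1
    linarith))
  obtain ⟨r, hr1, hr2⟩ := exists_rat_btwn
    (show d - 3 * (b:ℝ) < d - 2 * (b:ℝ) by linarith)
  set g : ℝ := (r : ℝ) + (b : ℝ) * Real.sqrt 2 with hg
  have hglb : d - 2 * (b:ℝ) < g := by
    nlinarith [sqrt2_one_le, hb0]
  have hgub : g < d - (b:ℝ) / 2 := by
    nlinarith [sqrt2_le, hb0]
  have hd4096 : 4096 * (b:ℝ) ≤ d := by linarith
  have hProt : Prot g := by
    refine ⟨b, r, hg, hb0', ?_, by linarith⟩
    nlinarith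
  have hbOf : bOf g = b := bOf_eq hProt hg
  refine ⟨g, hProt, by rw [hbOf]; exact hbd, by nlinarith, by linarith⟩

open Classical in
/-- The "new distance" function for side-R moves. -/
noncomputable def Gfun (d : ℝ) : ℝ :=
  if h : Prot d then d + (bOf d : ℝ)
  else if hd : 0 < d then (exists_reset d hd).choose
  else (exists_reset 1 one_pos).choose

lemma Gfun_prot {d : ℝ} (h : Prot d) : Gfun d = d + (bOf d : ℝ) := by
  rw [Gfun, dif_pos h]

lemma Gfun_reset {d : ℝ} (h : ¬ Prot d) (hd : 0 < d) :
    Prot (Gfun d) ∧ (bOf (Gfun d) : ℝ) ≤ d / 4096 ∧ d / 2 ≤ Gfun d ∧ Gfun d < d := by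
  rw [Gfun, dif_neg h, dif_pos hd]
  exact (exists_reset d hd).choose_spec

lemma Gfun_nonpos {d : ℝ} (hd : ¬ 0 < d) :
    Prot (Gfun d) ∧ (bOf (Gfun d) : ℝ) ≤ 1 / 4096 ∧ 1 / 2 ≤ Gfun d ∧ Gfun d < 1 := by
  have h : ¬ Prot d := fun hp => hd hp.pos
  rw [Gfun, dif_neg h, dif_neg hd]
  have := (exists_reset 1 one_pos).choose_spec
  refine ⟨this.1, by linarith [this.2.1], by linarith [this.2.2.1], this.2.2.2⟩

/-- The memoryless algorithm. -/
noncomputable def myM : Side × ℝ → ℝ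
  | (Side.R, d) => d - Gfun d
  | (Side.L, d) => if d ≤ 0 then 1 else d

lemma stepR {D ε x : ℝ} (h : ε < x) :
    stepC myM D ε x = D - Gfun (D - x) := by
  simp only [stepC, if_pos h]
  show x + ((D - x) - Gfun (D - x)) = _
  ring

lemma stepL {D ε x : ℝ} (hε : 0 < ε) (h : x < -ε) :
    stepC myM D ε x = x + (if D + x ≤ 0 then 1 else D + x) := by
  simp only [stepC, if_neg (show ¬ ε < x by linarith), if_pos h]
  rfl
lemma sweep (D ε : ℝ) (hε : 0 < ε) :
    ∀ N : ℕ, ∀ x : ℝ, ∀ b : ℚ, ε < x → Prot (D - x) → bOf (D - x) = b →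
    x - ε ≤ (N : ℝ) * (b : ℝ) →
    ∃ n : ℕ, |(stepC myM D ε)^[n] x| ≤ ε ∨
      ((stepC myM D ε)^[n] x < -ε ∧ -2 * (b : ℝ) < (stepC myM D ε)^[n] x ∧
        2 * ε < (b : ℝ)) := by
  intro N
  induction N with
  | zero =>
    intro x b hx _ _ hN
    exfalso
    simp only [Nat.cast_zero, zero_mul] at hN
    linarith
  | succ N ih =>
    intro x b hx hp hbeq hN
    obtain ⟨a, hrep, hb0, hb2048, hb1024⟩ := bOf_spec hp
    rw [hbeq] at hrep hb0 hb2048 hb1024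
    have hbR : (0 : ℝ) < (b : ℝ) := by exact_mod_cast hb0
    have hstep : stepC myM D ε x = x - (b : ℝ) := by
      rw [stepR hx, Gfun_prot hp, hbeq]; ring
    set y := x - (b : ℝ) with hy
    rcases le_or_gt |y| ε with h1 | h1
    · exact ⟨1, Or.inl (by rw [Function.iterate_one, hstep]; exact h1)⟩
    · rcases lt_abs.mp h1 with h2 | h2
      · -- still on the right: continue the sweep
        have hrep' : D - y = ((a + b : ℚ) : ℝ) + (b : ℝ) * Real.sqrt 2 := by
          push_cast
          rw [hy]
          have : D - x = (a : ℝ) + (b : ℝ) * Real.sqrt 2 := hrep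
          linarith
        have hp' : Prot (D - y) := by
          refine ⟨b, a + b, hrep', hb0, ?_, hb1024⟩
          have : D - x ≤ D - y := by rw [hy]; linarith
          linarith
        have hbeq' : bOf (D - y) = b := bOf_eq hp' hrep'
        obtain ⟨n, hn⟩ := ih y b h2 hp' hbeq' (by push_cast at hN ⊢; linarith)
        refine ⟨n + 1, ?_⟩
        rwa [Function.iterate_add_apply, Function.iterate_one, hstep]
      · -- flipped to the left side
        have h2' : y < -ε := by linarith
        refine ⟨1, Or.inr ⟨?_, ?_, ?_⟩⟩
        · rw [Function.iterate_one, hstep]; exact h2'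
        · rw [Function.iterate_one, hstep]; linarith
        · linarith
lemma landing (D ε : ℝ) {x : ℝ} (hx : ε < x) (hu : 0 < D - x) :
    ∃ m : ℕ, ε < (stepC myM D ε)^[m] x ∧ Prot (D - (stepC myM D ε)^[m] x) ∧
      (bOf (D - (stepC myM D ε)^[m] x) : ℝ) ≤ (D - x) / 2048 := by
  by_cases hp : Prot (D - x)
  · obtain ⟨a, _, _, hb, _⟩ := bOf_spec hp
    exact ⟨0, hx, hp, hb⟩
  · obtain ⟨hP, hble, hge, hlt⟩ := Gfun_reset hp hu
    have hy : stepC myM D ε x = D - Gfun (D - x) := stepR hx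
    refine ⟨1, ?_, ?_, ?_⟩
    · rw [Function.iterate_one, hy]; linarith
    · rw [Function.iterate_one, hy]
      have : D - (D - Gfun (D - x)) = Gfun (D - x) := by ring
      rw [this]; exact hP
    · rw [Function.iterate_one, hy]
      have : D - (D - Gfun (D - x)) = Gfun (D - x) := by ring
      rw [this]; linarith

lemma succ_shift (D ε : ℝ) {x : ℝ} (m : ℕ)
    (h : ∃ n : ℕ, |(stepC myM D ε)^[n] ((stepC myM D ε)^[m] x)| ≤ ε) :
    ∃ n : ℕ, |(stepC myM D ε)^[n] x| ≤ ε := by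
  obtain ⟨n, hn⟩ := h
  exact ⟨n + m, by rwa [Function.iterate_add_apply]⟩

lemma mainR (D ε : ℝ) (hD : 1 < D) (hε : 0 < ε) :
    ∀ k : ℕ, ∀ x : ℝ, ε < x → Prot (D - x) →
    (bOf (D - x) : ℝ) ≤ 2 * ε * 512 ^ k →
    ∃ n : ℕ, |(stepC myM D ε)^[n] x| ≤ ε := by
  intro k
  induction k with
  | zero =>
    intro x hx hp hbk
    obtain ⟨a, hrep, hb0, hb2048, hb1024⟩ := bOf_spec hp
    have hbR : (0 : ℝ) < (bOf (D - x) : ℝ) := by exact_mod_cast hb0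
    obtain ⟨N, hN⟩ := exists_nat_ge ((x - ε) / (bOf (D - x) : ℝ))
    have hN' : x - ε ≤ (N : ℝ) * (bOf (D - x) : ℝ) := by
      rw [div_le_iff₀ hbR] at hN; linarith
    obtain ⟨n, hn | ⟨_, _, h3⟩⟩ := sweep D ε hε N x (bOf (D - x)) hx hp rfl hN'
    · exact ⟨n, hn⟩
    · exfalso
      simp only [pow_zero, mul_one] at hbk
      linarith
  | succ k ih =>
    intro x hx hp hbk
    obtain ⟨a, hrep, hb0, hb2048, hb1024⟩ := bOf_spec hp
    have hbR : (0 : ℝ) < (bOf (D - x) : ℝ) := by exact_mod_cast hb0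
    obtain ⟨N, hN⟩ := exists_nat_ge ((x - ε) / (bOf (D - x) : ℝ))
    have hN' : x - ε ≤ (N : ℝ) * (bOf (D - x) : ℝ) := by
      rw [div_le_iff₀ hbR] at hN; linarith
    obtain ⟨n, hn | ⟨h1, h2, h3⟩⟩ := sweep D ε hε N x (bOf (D - x)) hx hp rfl hN'
    · exact ⟨n, hn⟩
    · set b : ℝ := (bOf (D - x) : ℝ) with hbdef
      set y := (stepC myM D ε)^[n] x with hydef
      -- bounce off the left wall back near the right wall
      have hDy : ¬ (D + y ≤ 0) := by push_neg; linarith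
      have hy2 : stepC myM D ε y = 2 * y + D := by
        rw [stepL hε h1, if_neg hDy]; ring
      set x2 := 2 * y + D with hx2def
      have hεsmall : ε < 1 / 2048 := by linarith
      have hx2 : ε < x2 := by linarith
      have hu2a : D - x2 ≤ 4 * b := by linarith
      have hu2pos : 0 < D - x2 := by linarith
      obtain ⟨m, hx', hp', hb'⟩ := landing D ε hx2 hu2pos
      have hb'' : (bOf (D - (stepC myM D ε)^[m] x2) : ℝ) ≤ 2 * ε * 512 ^ k := by
        have h512 : (512 : ℝ) ^ (k + 1) = 512 ^ k * 512 := pow_succ 512 k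
        calc (bOf (D - (stepC myM D ε)^[m] x2) : ℝ) ≤ (D - x2) / 2048 := hb'
          _ ≤ 4 * b / 2048 := by linarith
          _ = b / 512 := by ring
          _ ≤ 2 * ε * 512 ^ k := by
              rw [div_le_iff₀ (by norm_num : (0:ℝ) < 512)]
              calc b ≤ 2 * ε * 512 ^ (k+1) := hbk
                _ = 2 * ε * 512 ^ k * 512 := by rw [h512]; ring
      obtain ⟨n', hn'⟩ := ih ((stepC myM D ε)^[m] x2) hx' hp' hb''
      have e1 : (stepC myM D ε)^[1 + n] x = x2 := by
        rw [Function.iterate_add_apply, Function.iterate_one, ← hydef, hy2]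
      have e2 : (stepC myM D ε)^[m + (1 + n)] x = (stepC myM D ε)^[m] x2 := by
        rw [Function.iterate_add_apply, e1]
      exact ⟨n' + (m + (1 + n)), by rwa [Function.iterate_add_apply, e2]⟩
lemma arch512 {ε : ℝ} (hε : 0 < ε) (b : ℝ) : ∃ k : ℕ, b ≤ 2 * ε * 512 ^ k := by
  obtain ⟨k, hk⟩ := pow_unbounded_of_one_lt (b / (2 * ε)) (show (1:ℝ) < 512 by norm_num)
  refine ⟨k, ?_⟩
  rw [div_lt_iff₀ (by linarith)] at hk
  nlinarith [pow_pos (show (0:ℝ) < 512 by norm_num) k]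

lemma initR (D ε : ℝ) (hD : 1 < D) (hε : 0 < ε) :
    ∀ x : ℝ, ε < x → x ≤ D → ∃ n : ℕ, |(stepC myM D ε)^[n] x| ≤ ε := by
  intro x hx hxD
  by_cases hu : 0 < D - x
  · obtain ⟨m, hx', hp', _⟩ := landing D ε hx hu
    obtain ⟨k, hk⟩ := arch512 hε ((bOf (D - (stepC myM D ε)^[m] x)) : ℝ)
    exact succ_shift D ε m (mainR D ε hD hε k _ hx' hp' hk)
  · -- x = D, distance 0 : reset lands in (D - 1, D)
    have h0 : D - x = 0 := by linarith
    obtain ⟨hP, hble, hge, hlt⟩ := Gfun_nonpos (show ¬ (0:ℝ) < D - x by rw [h0]; norm_num)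
    have hstep : stepC myM D ε x = D - Gfun (D - x) := stepR hx
    set y := D - Gfun (D - x) with hydef
    have hDy : D - y = Gfun (D - x) := by rw [hydef]; ring
    have hy1 : D - 1 < y := by rw [hydef]; linarith
    rcases le_or_gt |y| ε with h1 | h1
    · exact ⟨1, by rwa [Function.iterate_one, hstep]⟩
    · rcases lt_abs.mp h1 with h2 | h2
      · obtain ⟨k, hk⟩ := arch512 hε ((bOf (D - y)) : ℝ)
        have := mainR D ε hD hε k y h2 (by rwa [hDy]) hk
        exact succ_shift D ε 1 (by rwa [Function.iterate_one, hstep])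
      · exfalso; linarith

lemma climb (D ε : ℝ) (hD : 1 < D) (hε : 0 < ε) :
    ∀ k : ℕ, ∀ x : ℝ, -D ≤ x → x < -ε → 0 < D + x → D ≤ (D + x) * 2 ^ k →
    ∃ n : ℕ, |(stepC myM D ε)^[n] x| ≤ ε := by
  intro k
  induction k with
  | zero => intro x _ hx hv hk; exfalso; simp only [pow_zero, mul_one] at hk; linarith
  | succ k ih =>
    intro x hxD hx hv hk
    have hstep : stepC myM D ε x = 2 * x + D := by
      rw [stepL hε hx, if_neg (by linarith)]; ring
    set y := 2 * x + D with hydef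
    rcases le_or_gt |y| ε with h1 | h1
    · exact ⟨1, by rwa [Function.iterate_one, hstep]⟩
    · rcases lt_abs.mp h1 with h2 | h2
      · have := initR D ε hD hε y h2 (by linarith)
        exact succ_shift D ε 1 (by rwa [Function.iterate_one, hstep])
      · have h2' : y < -ε := by linarith
        have := ih y (by linarith) h2' (by linarith)
          (by rw [pow_succ] at hk; nlinarith)
        exact succ_shift D ε 1 (by rwa [Function.iterate_one, hstep])

lemma initL (D ε : ℝ) (hD : 1 < D) (hε : 0 < ε) :
    ∀ x : ℝ, -D ≤ x → x < -ε → ∃ n : ℕ, |(stepC myM D ε)^[n] x| ≤ ε := by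
  intro x hxD hx
  by_cases hv : 0 < D + x
  · obtain ⟨k, hk⟩ := pow_unbounded_of_one_lt (D / (D + x)) (show (1:ℝ) < 2 by norm_num)
    rw [div_lt_iff₀ hv] at hk
    exact climb D ε hD hε k x hxD hx hv (by nlinarith)
  · -- x = -D
    have hstep : stepC myM D ε x = x + 1 := by
      rw [stepL hε hx, if_pos (by linarith)]
    set y := x + 1 with hydef
    have hx0 : x = -D := by linarith
    rcases le_or_gt |y| ε with h1 | h1
    · exact ⟨1, by rwa [Function.iterate_one, hstep]⟩
    · rcases lt_abs.mp h1 with h2 | h2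
      · have := initR D ε hD hε y h2 (by rw [hydef, hx0]; linarith)
        exact succ_shift D ε 1 (by rwa [Function.iterate_one, hstep])
      · have h2' : y < -ε := by linarith
        obtain ⟨k, hk⟩ := pow_unbounded_of_one_lt D (show (1:ℝ) < 2 by norm_num)
        have hvy : D + y = 1 := by rw [hydef, hx0]; ring
        have := climb D ε hD hε k y (by rw [hydef, hx0]; linarith) h2'
          (by rw [hvy]; norm_num) (by rw [hvy]; linarith)
        exact succ_shift D ε 1 (by rwa [Function.iterate_one, hstep])
lemma invariance (D ε : ℝ) (hD : 1 < D) (hε : 0 < ε) :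
    ∀ x ∈ Set.Icc (-D) D, stepC myM D ε x ∈ Set.Icc (-D) D := by
  rintro x ⟨hx1, hx2⟩
  by_cases hR : ε < x
  · rw [stepR hR]
    have hG : 0 ≤ Gfun (D - x) ∧ Gfun (D - x) ≤ 2 * D := by
      by_cases hp : Prot (D - x)
      · obtain ⟨a, _, hb0, _, hb1024⟩ := bOf_spec hp
        have hbR : (0 : ℝ) < (bOf (D - x) : ℝ) := by exact_mod_cast hb0
        rw [Gfun_prot hp]
        constructor <;> linarith
      · by_cases hu : 0 < D - x
        · obtain ⟨_, _, hge, hlt⟩ := Gfun_reset hp hu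
          constructor <;> linarith
        · obtain ⟨_, _, hge, hlt⟩ := Gfun_nonpos hu
          constructor <;> linarith
    constructor <;> [linarith [hG.2]; linarith [hG.1]]
  · by_cases hL : x < -ε
    · rw [stepL hε hL]
      by_cases hv : D + x ≤ 0
      · rw [if_pos hv]
        constructor <;> linarith
      · rw [if_neg hv]
        push_neg at hv
        constructor <;> linarith
    · have : stepC myM D ε x = x := by
        simp only [stepC, if_neg hR, if_neg hL]
      rw [this]; exact ⟨hx1, hx2⟩
theorem convergence_solvable :
    ∃ M : Side × ℝ → ℝ, ∀ D ε : ℝ, 1 < D → 0 < ε → ε ≤ D →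
      (∀ x ∈ Set.Icc (-D) D, stepC M D ε x ∈ Set.Icc (-D) D) ∧
      (∀ x₀ ∈ Set.Icc (-D) D, ∃ n : ℕ, |(stepC M D ε)^[n] x₀| ≤ ε) := by
  refine ⟨myM, fun D ε hD hε _ => ⟨invariance D ε hD hε, ?_⟩⟩
  rintro x₀ ⟨h1, h2⟩
  rcases le_or_gt |x₀| ε with h | h
  · exact ⟨0, h⟩
  · rcases lt_abs.mp h with h' | h'
    · exact initR D ε hD hε x₀ h' h2
    · exact initL D ε hD hε x₀ h1 (by linarith)
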